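/- arXiv:2007.00949 — 5 statements merged into one kernel-verified Lean document; each statement's English description precedes it below -/
import Mathlib

section
/- If u_1,...,u_n are unit vectors in ℝ² (indices mod n, so u_{n+1} = u_1) and d_1,...,d_n are positive reals with ∑_{i=1}^n d_i u_i = 0, then ∑_{i=1}^n ‖u_{i+1} − u_i‖ > 1. -/
/-!
Pairing `∑ dᵢ uᵢ = 0` with `u₀` and using `dᵢ > 0` gives some `uⱼ` with `⟪u₀, uⱼ⟫ ≤ 0`, so
`‖uⱼ - u₀‖² = 2 - 2⟪u₀, uⱼ⟫ ≥ 2`. The closed polygon `u₀, u₁, …, uₙ₋₁, u₀` passes through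
both `u₀` and `uⱼ`, so its length is at least `‖uⱼ - u₀‖ ≥ √2 > 1`.
-/

open Finset
open scoped InnerProductSpace

theorem Fin.norm_sub_le_sum_norm_sub_succ {E : Type*} [SeminormedAddCommGroup E] {n : ℕ}
    [NeZero n] (f : Fin n → E) (j : Fin n) :
    ‖f j - f 0‖ ≤ ∑ i : Fin n, ‖f (i + 1) - f i‖ := by
  let g : ℕ → E := fun k ↦ f (Fin.ofNat n k)
  calc ‖f j - f 0‖ = dist (g 0) (g j) := by
        simp [g, dist_eq_norm', Fin.ofNat_eq_cast]
    _ ≤ ∑ k ∈ range j, dist (g k) (g (k + 1)) := dist_le_range_sum_dist g j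
    _ ≤ ∑ k ∈ range n, dist (g k) (g (k + 1)) :=
        sum_le_sum_of_subset_of_nonneg (range_subset_range.2 j.isLt.le)
          (fun _ _ _ ↦ dist_nonneg)
    _ = ∑ i : Fin n, ‖f (i + 1) - f i‖ := by
        rw [← Fin.sum_univ_eq_sum_range]
        refine sum_congr rfl fun i _ ↦ ?_
        have hsucc : Fin.ofNat n (i + 1) = i + 1 := by ext; simp [Fin.val_add]
        simp only [g, hsucc, dist_eq_norm', Fin.ofNat_val_eq_self]

section InnerProductSpace

variable {E : Type*} [NormedAddCommGroup E] [InnerProductSpace ℝ E]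

theorem exists_inner_nonpos_of_sum_smul_eq_zero {ι : Type*} [Fintype ι] [Nonempty ι]
    {u : ι → E} {d : ι → ℝ} (hd : ∀ i, 0 < d i) (hsum : ∑ i, d i • u i = 0) (v : E) :
    ∃ j, ⟪v, u j⟫_ℝ ≤ 0 := by
  by_contra! h
  have hzero : ∑ i, d i * ⟪v, u i⟫_ℝ = 0 := by
    simpa only [inner_sum, real_inner_smul_right, inner_zero_right] using
      congrArg (⟪v, ·⟫_ℝ) hsum
  have hpos : 0 < ∑ i, d i * ⟪v, u i⟫_ℝ :=
    sum_pos (fun i _ ↦ mul_pos (hd i) (h i)) univ_nonempty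
  exact hpos.ne' hzero

theorem one_lt_norm_sub_of_inner_nonpos {x y : E} (hx : ‖x‖ = 1) (hy : ‖y‖ = 1)
    (hxy : ⟪x, y⟫_ℝ ≤ 0) : 1 < ‖x - y‖ := by
  have hsq : 2 ≤ ‖x - y‖ ^ 2 := by
    rw [norm_sub_sq_real, hx, hy]
    linarith
  nlinarith [norm_nonneg (x - y)]

end InnerProductSpace

/-- If unit vectors `u_i` in ℝ² (cyclic indexing) satisfy `∑ d_i u_i = 0` with all
`d_i > 0`, then `∑ ‖u_{i+1} − u_i‖ > 1`. -/
theorem sum_consecutive_diff_gt_one (n : ℕ) [NeZero n]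
    (u : Fin n → EuclideanSpace ℝ (Fin 2)) (hu : ∀ i, ‖u i‖ = 1)
    (d : Fin n → ℝ) (hd : ∀ i, 0 < d i)
    (hsum : ∑ i, d i • u i = 0) :
    1 < ∑ i : Fin n, ‖u (i + 1) - u i‖ := by
  obtain ⟨j, hj⟩ := exists_inner_nonpos_of_sum_smul_eq_zero hd hsum (u 0)
  calc 1 < ‖u j - u 0‖ :=
        one_lt_norm_sub_of_inner_nonpos (hu j) (hu 0) (by rwa [real_inner_comm])
    _ ≤ ∑ i : Fin n, ‖u (i + 1) - u i‖ := Fin.norm_sub_le_sum_norm_sub_succ u j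
end

section
/- Under the hypotheses of the bugs model without external input (ṗ_i = (p_{i+1}−p_i)/d_i, all d_i > 0), the sum of distances strictly decreases at a uniform rate: ∑_{i=1}^n ḋ_i ≤ −1/(2n). -/
/-!
The unit velocities `u i = pdot i` satisfy `∑ d i • u i = 0` because the polygon closes, so some
`u j` makes an obtuse angle with `u 0`; hence `‖u j - u 0‖ ≥ 1` and, by the triangle inequality
around the cycle, `∑ ‖u (i + 1) - u i‖ ≥ 1`. For unit vectors
`⟪u i, u (i + 1) - u i⟫ = -‖u (i + 1) - u i‖² / 2`, and Cauchy–Schwarz turns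
`∑ ‖u (i + 1) - u i‖ ≥ 1` into `∑ ‖u (i + 1) - u i‖² ≥ 1 / n`.
-/

open Finset

theorem Fin.sum_add_one_sub_eq_zero {G : Type*} [AddCommGroup G] {n : ℕ} [NeZero n]
    (f : Fin n → G) : ∑ i, (f (i + 1) - f i) = 0 := by
  rw [sum_sub_distrib, sub_eq_zero]
  exact Fintype.sum_equiv (Equiv.addRight 1) _ _ fun _ => rfl

open Fin.NatCast in
theorem Fin.dist_le_sum_dist_add_one {α : Type*} [PseudoMetricSpace α] {n : ℕ} [NeZero n]
    (f : Fin n → α) (i j : Fin n) : dist (f i) (f j) ≤ ∑ k, dist (f k) (f (k + 1)) := by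
  have hpath := dist_le_range_sum_dist (fun m : ℕ => f (i + m)) (j - i).val
  simp only [Fin.cast_val_eq_self, add_sub_cancel, add_zero, Nat.cast_zero] at hpath
  calc dist (f i) (f j)
      ≤ ∑ m ∈ range (j - i).val, dist (f (i + m)) (f (i + ↑(m + 1))) := hpath
    _ ≤ ∑ m ∈ range n, dist (f (i + m)) (f (i + ↑(m + 1))) :=
        sum_le_sum_of_subset_of_nonneg (range_subset_range.2 (j - i).isLt.le)
          fun _ _ _ => dist_nonneg
    _ = ∑ k : Fin n, dist (f (i + k)) (f (i + k + 1)) := by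
        rw [← Fin.sum_univ_eq_sum_range (fun m => dist (f (i + m)) (f (i + ↑(m + 1))))]
        simp only [Nat.cast_add, Nat.cast_one, Fin.cast_val_eq_self, add_assoc]
    _ = ∑ k, dist (f k) (f (k + 1)) :=
        Fintype.sum_equiv (Equiv.addLeft i) _ _ fun _ => rfl

section InnerProductSpace

variable {E : Type*} [NormedAddCommGroup E] [InnerProductSpace ℝ E]

theorem inner_sub_self_eq_neg_half_norm_sub_sq {u v : E} (hu : ‖u‖ = 1) (hv : ‖v‖ = 1) :
    inner ℝ u (v - u) = -(‖v - u‖ ^ 2) / 2 := by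
  rw [inner_sub_right, real_inner_self_eq_norm_sq, norm_sub_sq_real, real_inner_comm, hu, hv]
  ring

theorem one_le_norm_sub_of_inner_nonpos {u v : E} (hu : ‖u‖ = 1) (hv : ‖v‖ = 1)
    (huv : inner ℝ u v ≤ 0) : 1 ≤ ‖v - u‖ := by
  have hsq : ‖v - u‖ ^ 2 = 2 - 2 * inner ℝ u v := by
    rw [norm_sub_sq_real, real_inner_comm, hu, hv]
    ring
  nlinarith [norm_nonneg (v - u)]

theorem exists_inner_neg_of_sum_smul_eq_zero {ι : Type*} [Fintype ι] {w : ι → ℝ} {u : ι → E}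
    (hw : ∀ i, 0 < w i) (hsum : ∑ i, w i • u i = 0) {k : ι} (hk : u k ≠ 0) :
    ∃ j, inner ℝ (u k) (u j) < 0 := by
  by_contra! hnonneg
  have hzero : ∑ i, w i * inner ℝ (u k) (u i) = 0 := by
    simpa only [inner_sum, real_inner_smul_right, inner_zero_right] using
      congrArg (inner ℝ (u k)) hsum
  have hle : w k * inner ℝ (u k) (u k) ≤ ∑ i, w i * inner ℝ (u k) (u i) :=
    single_le_sum (fun i _ => mul_nonneg (hw i).le (hnonneg i)) (mem_univ k)
  have hpos : 0 < w k * inner ℝ (u k) (u k) :=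
    mul_pos (hw k) (real_inner_self_pos.2 hk)
  linarith

theorem one_le_sum_norm_add_one_sub {n : ℕ} [NeZero n] {w : Fin n → ℝ} {u : Fin n → E}
    (hw : ∀ i, 0 < w i) (hu : ∀ i, ‖u i‖ = 1) (hsum : ∑ i, w i • u i = 0) :
    1 ≤ ∑ i, ‖u (i + 1) - u i‖ := by
  obtain ⟨j, hj⟩ := exists_inner_neg_of_sum_smul_eq_zero hw hsum
    (k := 0) (norm_ne_zero_iff.1 ((hu 0).trans_ne one_ne_zero))
  calc 1 ≤ ‖u j - u 0‖ := one_le_norm_sub_of_inner_nonpos (hu 0) (hu j) hj.le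
    _ = dist (u 0) (u j) := (dist_eq_norm' _ _).symm
    _ ≤ ∑ i, dist (u i) (u (i + 1)) := Fin.dist_le_sum_dist_add_one u 0 j
    _ = ∑ i, ‖u (i + 1) - u i‖ := by simp only [dist_eq_norm']

end InnerProductSpace

theorem inv_card_le_sum_sq_of_one_le_sum {ι : Type*} {s : Finset ι} {a : ι → ℝ}
    (ha : 1 ≤ ∑ i ∈ s, a i) : (#s : ℝ)⁻¹ ≤ ∑ i ∈ s, a i ^ 2 := by
  have hcs := sq_sum_le_card_mul_sum_sq (s := s) (f := a)
  rcases (Nat.cast_nonneg (α := ℝ) #s).eq_or_lt with hcard | hcard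
  · rw [← hcard, inv_zero]
    exact sum_nonneg fun i _ => sq_nonneg (a i)
  · rw [inv_le_iff_one_le_mul₀' hcard]
    nlinarith

/-- In the bugs model without input, the sum of the distance derivatives satisfies
`∑ ḋ_i ≤ −1/(2n)`, where `ḋ_i = ⟨ṗ_i, ṗ_{i+1} − ṗ_i⟩`. -/
theorem bugs_sum_distance_derivative_bound (n : ℕ) [NeZero n]
    (p pdot : Fin n → EuclideanSpace ℝ (Fin 2))
    (d : Fin n → ℝ) (hd : ∀ i, d i = ‖p (i + 1) - p i‖)
    (hdpos : ∀ i, 0 < d i)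
    (hpdot : ∀ i, pdot i = (d i)⁻¹ • (p (i + 1) - p i)) :
    ∑ i : Fin n, (inner ℝ (pdot i) (pdot (i + 1) - pdot i) : ℝ) ≤ -1 / (2 * n) := by
  have hunit : ∀ i, ‖pdot i‖ = 1 := fun i => by
    rw [hpdot i, norm_smul, norm_inv, Real.norm_of_nonneg (hdpos i).le, ← hd i,
      inv_mul_cancel₀ (hdpos i).ne']
  have hclosed : ∑ i, d i • pdot i = 0 := by
    simp only [hpdot, smul_inv_smul₀ (hdpos _).ne']
    exact Fin.sum_add_one_sub_eq_zero p
  have hsq := inv_card_le_sum_sq_of_one_le_sum (one_le_sum_norm_add_one_sub hdpos hunit hclosed)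
  rw [card_univ, Fintype.card_fin] at hsq
  calc ∑ i, inner ℝ (pdot i) (pdot (i + 1) - pdot i)
      = -(∑ i, ‖pdot (i + 1) - pdot i‖ ^ 2) / 2 := by
        simp only [inner_sub_self_eq_neg_half_norm_sub_sq (hunit _) (hunit _), ← sum_div,
          sum_neg_distrib]
    _ ≤ -(n : ℝ)⁻¹ / 2 := by linarith
    _ = -1 / (2 * n) := by field_simp
end

section
/- In the bugs model without external input, if at initial time t_0 all distances are positive, then there exists a finite time T_m ≤ t_0 + 2n ∑_{i=1}^n d_i(t_0) at which ∑_{i=1}^n d_i(T_m) = 0, i.e., all agents have gathered at a single point. -/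
/-- Bugs model without input: if at time `t₀` all distances are positive, there is a
finite time `T_m ≤ t₀ + 2n ∑ d_i(t₀)` at which `∑ d_i(T_m) = 0` (all agents gathered). -/
theorem bugs_gathering_in_finite_time (n : ℕ) [NeZero n]
    (p : Fin n → ℝ → EuclideanSpace ℝ (Fin 2))
    (d : Fin n → ℝ → ℝ) (hd : ∀ i t, d i t = ‖p (i + 1) t - p i t‖)
    (D : ℝ → ℝ) (hD : ∀ t, D t = ∑ i : Fin n, d i t)
    (hcont : Continuous D)
    (t0 : ℝ) (hpos : ∀ i, 0 < d i t0)
    (hdecay : ∀ t, t0 ≤ t → 0 < D t →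
      ∃ D' : ℝ, HasDerivAt D D' t ∧ D' ≤ -1 / (2 * n)) :
    ∃ Tm : ℝ, Tm ≤ t0 + 2 * n * D t0 ∧ D Tm = 0 := by
  have hn : (0 : ℝ) < n := by
    exact_mod_cast Nat.pos_of_ne_zero (NeZero.ne n)
  have hc : (0 : ℝ) < 1 / (2 * n) := by positivity
  have hD0 : 0 < D t0 := by
    rw [hD]
    exact Finset.sum_pos (fun i _ => hpos i) ⟨⟨0, Nat.pos_of_ne_zero (NeZero.ne n)⟩,
      Finset.mem_univ _⟩
  set T : ℝ := t0 + 2 * n * D t0 with hT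
  have htT : t0 ≤ T := by nlinarith
  -- Step 1: there exists t in [t0, T] with D t ≤ 0
  have key : ∃ t ∈ Set.Icc t0 T, D t ≤ 0 := by
    by_contra h
    push_neg at h
    have hposD : ∀ t ∈ Set.Icc t0 T, 0 < D t := h
    set f : ℝ → ℝ := fun t => D t + (t - t0) * (1 / (2 * n)) with hf
    have hfc : ContinuousOn f (Set.Icc t0 T) := by
      exact (hcont.add ((continuous_id.sub continuous_const).mul continuous_const)).continuousOn
    have hder : ∀ x ∈ interior (Set.Icc t0 T), deriv f x ≤ 0 := by
      intro x hx
      rw [interior_Icc] at hx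
      obtain ⟨D', hD', hle⟩ := hdecay x hx.1.le (hposD x ⟨hx.1.le, hx.2.le⟩)
      have hfd : HasDerivAt f (D' + 1 / (2 * n)) x := by
        have h2 : HasDerivAt (fun t : ℝ => (t - t0) * (1 / (2 * n))) (1 / (2 * n)) x := by
          simpa using ((hasDerivAt_id x).sub_const t0).mul_const (1 / (2 * n))
        exact hD'.add h2
      rw [hfd.deriv]
      have : D' ≤ -1 / (2 * n) := hle
      have : D' ≤ -(1 / (2 * n)) := by rw [neg_div] at this; exact this
      linarith
    have hanti : AntitoneOn f (Set.Icc t0 T) :=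
      antitoneOn_of_deriv_nonpos (convex_Icc t0 T) hfc
        (fun x hx => by
          rw [interior_Icc] at hx
          obtain ⟨D', hD', _⟩ := hdecay x hx.1.le (hposD x ⟨hx.1.le, hx.2.le⟩)
          have h2 : HasDerivAt (fun t : ℝ => (t - t0) * (1 / (2 * n))) (1 / (2 * n)) x := by
            simpa using ((hasDerivAt_id x).sub_const t0).mul_const (1 / (2 * n))
          exact ((hD'.add h2).differentiableAt).differentiableWithinAt)
        hder
    have hfT : f T ≤ f t0 := hanti ⟨le_refl t0, htT⟩ ⟨htT, le_refl T⟩ htT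
    have hDT : 0 < D T := hposD T ⟨htT, le_refl T⟩
    have hTt0 : T - t0 = 2 * n * D t0 := by rw [hT]; ring
    have : D T + (2 * n * D t0) * (1 / (2 * n)) ≤ D t0 := by
      simpa [hf, hTt0] using hfT
    have heq : 2 * (n:ℝ) * D t0 * (1 / (2 * n)) = D t0 := by field_simp
    linarith
  obtain ⟨t1, ht1, hDt1⟩ := key
  -- Step 2: intermediate value theorem on [t0, t1]
  have hivt : Set.Icc (D t1) (D t0) ⊆ D '' Set.Icc t0 t1 :=
    intermediate_value_Icc' ht1.1 hcont.continuousOn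
  have h0mem : (0 : ℝ) ∈ Set.Icc (D t1) (D t0) := ⟨hDt1, hD0.le⟩
  obtain ⟨Tm, hTm, hDTm⟩ := hivt h0mem
  exact ⟨Tm, le_trans hTm.2 ht1.2, hDTm⟩
end

section
/- In the bugs model with broadcast control U_c ∈ ℝ², when both agents i and i+1 detect U_c (so ṗ_j = (p_{j+1}−p_j)/d_j + U_c for j = i, i+1), the derivative of the inter-agent distance satisfies ḋ_i = cos θ − 1 ≤ 0 for any U_c, where θ is the angle between ṗ_i − U_c and ṗ_{i+1} − U_c. -/
/-! The relative velocity `u₀ = ṗ_i - U_c = (p_{i+1} - p_i)/d_i` is a unit vector with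
`p_{i+1} - p_i = d_i u₀`, so `ḋ_i = ⟪u₁ - u₀, u₀⟫ = ⟪u₁, u₀⟫ - 1` for `u₁ = ṗ_{i+1} - U_c`; since
`‖u₁‖ ≤ 1`, Cauchy–Schwarz makes this `≤ 0`. -/

open scoped RealInnerProductSpace

section

variable {E : Type*} [NormedAddCommGroup E] [InnerProductSpace ℝ E]

theorem norm_inv_norm_smul_le_one (v : E) : ‖‖v‖⁻¹ • v‖ ≤ 1 := by
  rw [norm_smul, norm_inv, norm_norm]
  exact inv_mul_le_one

theorem real_inner_sub_self_of_norm_eq_one {u : E} (hu : ‖u‖ = 1) (w : E) :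
    ⟪w - u, u⟫ = ⟪w, u⟫ - 1 := by
  rw [inner_sub_left, real_inner_self_eq_norm_sq, hu, one_pow]

theorem real_inner_le_one_of_norm_le_one {u w : E} (hu : ‖u‖ = 1) (hw : ‖w‖ ≤ 1) :
    ⟪w, u⟫ ≤ 1 :=
  calc ⟪w, u⟫ ≤ ‖w‖ * ‖u‖ := real_inner_le_norm w u
    _ ≤ 1 := by rw [hu, mul_one]; exact hw

end

theorem bugs_both_detect_distance_nonincreasing_general
    (p0 p1 p2 : EuclideanSpace ℝ (Fin 2)) (Uc : EuclideanSpace ℝ (Fin 2))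
    (d0 d1 : ℝ) (hd0 : d0 = ‖p1 - p0‖) (hd1 : d1 = ‖p2 - p1‖)
    (hd0pos : 0 < d0)
    (pdot0 pdot1 : EuclideanSpace ℝ (Fin 2))
    (hpdot0 : pdot0 = (d0)⁻¹ • (p1 - p0) + Uc)
    (hpdot1 : pdot1 = (d1)⁻¹ • (p2 - p1) + Uc)
    (ddot : ℝ) (hddot : ddot = (d0)⁻¹ * (inner ℝ (pdot1 - pdot0) (p1 - p0) : ℝ)) :
    ddot = (inner ℝ (pdot1 - Uc) (pdot0 - Uc) : ℝ) - 1 ∧ ddot ≤ 0 := by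
  have hu0 : pdot0 - Uc = d0⁻¹ • (p1 - p0) := by rw [hpdot0, add_sub_cancel_right]
  have hu1 : pdot1 - Uc = d1⁻¹ • (p2 - p1) := by rw [hpdot1, add_sub_cancel_right]
  have hu0_norm : ‖pdot0 - Uc‖ = 1 := by
    rw [hu0, norm_smul, norm_inv, Real.norm_of_nonneg hd0pos.le, hd0,
      inv_mul_cancel₀ (hd0 ▸ hd0pos.ne')]
  have hu1_norm : ‖pdot1 - Uc‖ ≤ 1 := hu1 ▸ hd1 ▸ norm_inv_norm_smul_le_one (p2 - p1)
  have hp10 : p1 - p0 = d0 • (pdot0 - Uc) := by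
    rw [hu0, smul_inv_smul₀ hd0pos.ne']
  have hdiff : pdot1 - pdot0 = (pdot1 - Uc) - (pdot0 - Uc) := (sub_sub_sub_cancel_right _ _ _).symm
  have key : ddot = ⟪pdot1 - Uc, pdot0 - Uc⟫ - 1 := by
    rw [hddot, hdiff, hp10, real_inner_smul_right, inv_mul_cancel_left₀ hd0pos.ne',
      real_inner_sub_self_of_norm_eq_one hu0_norm]
  exact ⟨key, key ▸ sub_nonpos.mpr (real_inner_le_one_of_norm_le_one hu0_norm hu1_norm)⟩

/-- Bugs model with broadcast control: when both agents `i` and `i+1` detect `U_c`,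
`ḋ_i = (1/d_i)⟨ṗ_{i+1}−ṗ_i, p_{i+1}−p_i⟩ = cos θ − 1 ≤ 0` for any `U_c`,
where `θ` is the angle between `ṗ_i − U_c` and `ṗ_{i+1} − U_c`. -/
theorem bugs_both_detect_distance_nonincreasing
    (p0 p1 p2 : EuclideanSpace ℝ (Fin 2)) (Uc : EuclideanSpace ℝ (Fin 2))
    (d0 d1 : ℝ) (hd0 : d0 = ‖p1 - p0‖) (hd1 : d1 = ‖p2 - p1‖)
    (hd0pos : 0 < d0) (hd1pos : 0 < d1)
    (pdot0 pdot1 : EuclideanSpace ℝ (Fin 2))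
    (hpdot0 : pdot0 = (d0)⁻¹ • (p1 - p0) + Uc)
    (hpdot1 : pdot1 = (d1)⁻¹ • (p2 - p1) + Uc)
    (ddot : ℝ) (hddot : ddot = (d0)⁻¹ * (inner ℝ (pdot1 - pdot0) (p1 - p0) : ℝ)) :
    ddot = (inner ℝ (pdot1 - Uc) (pdot0 - Uc) : ℝ) - 1 ∧ ddot ≤ 0 :=
  bugs_both_detect_distance_nonincreasing_general p0 p1 p2 Uc d0 d1 hd0 hd1 hd0pos pdot0 pdot1
    hpdot0 hpdot1 ddot hddot
end

section
/- Under the gathering condition of the bugs model with broadcast control, the termination (mutual capture) time satisfies T_m ≤ t_0 + 2n ∑_{i=1}^n d_i(t_0) / (1 − 2n²‖U_c‖), assuming ‖U_c‖ < 1/(2n²). -/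
/-!
Until capture `D` decreases at rate at least `c = (1 - 2n²‖U_c‖) / (2n) > 0`, so by the mean
value theorem `c (T_m - t₀) ≤ D(t₀) - D(T_m) = D(t₀)`.
-/

open Set

theorem image_sub_le_mul_sub_of_hasDerivAt_le {f : ℝ → ℝ} {a b C : ℝ} (hab : a ≤ b)
    (hf : ContinuousOn f (Icc a b))
    (hf' : ∀ x ∈ Ioo a b, ∃ f' : ℝ, HasDerivAt f f' x ∧ f' ≤ C) :
    f b - f a ≤ C * (b - a) := by
  refine (convex_Icc a b).image_sub_le_mul_sub_of_deriv_le hf ?_ ?_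
    a (left_mem_Icc.2 hab) b (right_mem_Icc.2 hab) hab <;> rw [interior_Icc]
  · intro x hx
    obtain ⟨f', hderiv, -⟩ := hf' x hx
    exact hderiv.differentiableAt.differentiableWithinAt
  · intro x hx
    obtain ⟨f', hderiv, hle⟩ := hf' x hx
    exact hderiv.deriv ▸ hle

theorem le_add_div_of_hasDerivAt_le_neg {f : ℝ → ℝ} {a b c : ℝ} (hc : 0 < c) (hab : a ≤ b)
    (hf : ContinuousOn f (Icc a b)) (hfb : f b = 0)
    (hf' : ∀ x ∈ Ioo a b, ∃ f' : ℝ, HasDerivAt f f' x ∧ f' ≤ -c) :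
    b ≤ a + f a / c := by
  have hdrop := image_sub_le_mul_sub_of_hasDerivAt_le hab hf hf'
  rw [hfb] at hdrop
  rw [← sub_le_iff_le_add', le_div_iff₀ hc]
  linarith

theorem bugs_termination_time_bound_general (n : ℕ) [NeZero n]
    (Uc : EuclideanSpace ℝ (Fin 2)) (hUc : ‖Uc‖ < 1 / (2 * n ^ 2))
    (D : ℝ → ℝ) (hcont : Continuous D)
    (t0 Tm : ℝ) (ht0 : t0 ≤ Tm)
    (hdecay : ∀ t, t0 ≤ t → 0 < D t →
      ∃ D' : ℝ, HasDerivAt D D' t ∧ D' ≤ -1 / (2 * n) + n * ‖Uc‖)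
    (hTm : D Tm = 0)
    (hfirst : ∀ t, t0 ≤ t → t < Tm → 0 < D t) :
    Tm ≤ t0 + 2 * n * D t0 / (1 - 2 * n ^ 2 * ‖Uc‖) := by
  have hn : (0 : ℝ) < n := Nat.cast_pos.2 (Nat.pos_of_neZero n)
  have hmargin : 0 < 1 - 2 * n ^ 2 * ‖Uc‖ := by
    rw [lt_div_iff₀ (by positivity)] at hUc
    linarith
  have hrate : -1 / (2 * n) + n * ‖Uc‖ = -((1 - 2 * n ^ 2 * ‖Uc‖) / (2 * n)) := by
    field_simp
    ring
  have hbound := le_add_div_of_hasDerivAt_le_neg (div_pos hmargin (by positivity)) ht0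
    hcont.continuousOn hTm fun t ht => hrate ▸ hdecay t ht.1.le (hfirst t ht.1.le ht.2)
  rwa [div_div_eq_mul_div, mul_comm (D t0)] at hbound

/-- Bugs model with broadcast control, `‖U_c‖ < 1/(2n²)`: the mutual-capture time
satisfies `T_m ≤ t₀ + 2n·D(t₀)/(1 − 2n²‖U_c‖)`, where `D = ∑ d_i`. -/
theorem bugs_termination_time_bound (n : ℕ) [NeZero n]
    (Uc : EuclideanSpace ℝ (Fin 2)) (hUc : ‖Uc‖ < 1 / (2 * n ^ 2))
    (D : ℝ → ℝ) (hcont : Continuous D)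
    (t0 Tm : ℝ) (ht0 : t0 ≤ Tm)
    (hD0 : 0 < D t0)
    (hdecay : ∀ t, t0 ≤ t → 0 < D t →
      ∃ D' : ℝ, HasDerivAt D D' t ∧ D' ≤ -1 / (2 * n) + n * ‖Uc‖)
    (hTm : D Tm = 0)
    (hfirst : ∀ t, t0 ≤ t → t < Tm → 0 < D t) :
    Tm ≤ t0 + 2 * n * D t0 / (1 - 2 * n ^ 2 * ‖Uc‖) :=
  bugs_termination_time_bound_general n Uc hUc D hcont t0 Tm ht0 hdecay hTm hfirst
end
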